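/- Let K be a field and let A be an n×n matrix over a (not necessarily commutative) K-algebra. If A is hollow, i.e., contains a k×l block of zeros with k + l > n (after suitable row and column selection), then A is not full: A factors as A = T·U with T of size n×m and U of size m×n for some m < n. -/

import Mathlib

/-!
Let `I × J` be the zero block. Every entry of `A` either lies in a row outside `I`, or lies in a
row of `I` and then, being nonzero only off `J`, in a column outside `J`. Hence
`A = P A Q_J + A Q_{Jᶜ}`, where `P` keeps the rows outside `I` and `Q_S` keeps the columns in
`S`. The first summand factors through the `n - |I|` rows outside `I`, the second through the
`n - |J|` columns outside `J`, so `A` factors through `(n - |I|) + (n - |J|) < n` indices.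
-/

namespace Matrix

variable {m n R : Type*} [Semiring R]

theorem one_submatrix_val_mul_apply [DecidableEq m] (s : Finset m) (B : Matrix s n R) (i : m)
    (j : n) :
    ((1 : Matrix m m R).submatrix id ((↑) : s → m) * B) i j =
      if h : i ∈ s then B ⟨i, h⟩ j else 0 := by
  rw [mul_apply]
  simp only [submatrix_apply, id, one_apply, ite_mul, one_mul, zero_mul]
  split_ifs with h
  · rw [Fintype.sum_eq_single ⟨i, h⟩ fun a ha => if_neg fun hia => ha (Subtype.ext hia.symm),
      if_pos rfl]
  · exact Finset.sum_eq_zero fun a _ => if_neg fun (hia : i = a) => h (hia ▸ a.2)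

theorem mul_one_submatrix_val_apply [DecidableEq n] (s : Finset n) (B : Matrix m s R) (i : m)
    (j : n) :
    (B * (1 : Matrix n n R).submatrix ((↑) : s → n) id) i j =
      if h : j ∈ s then B i ⟨j, h⟩ else 0 := by
  rw [mul_apply]
  simp only [submatrix_apply, id, one_apply, mul_ite, mul_one, mul_zero]
  split_ifs with h
  · rw [Fintype.sum_eq_single ⟨j, h⟩ fun a ha => if_neg fun haj => ha (Subtype.ext haj),
      if_pos rfl]
  · exact Finset.sum_eq_zero fun a _ => if_neg fun (haj : (a : n) = j) => h (haj ▸ a.2)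

theorem exists_eq_mul_fin_of_eq_mul {ι : Type*} [Fintype ι] {A : Matrix m n R}
    {T : Matrix m ι R} {U : Matrix ι n R} (h : A = T * U) :
    ∃ (T' : Matrix m (Fin (Fintype.card ι)) R) (U' : Matrix (Fin (Fintype.card ι)) n R),
      A = T' * U' := by
  let e := (Fintype.equivFin ι).symm
  refine ⟨T.submatrix id e, U.submatrix e id, ?_⟩
  rw [submatrix_mul_equiv, submatrix_id_id, h]

variable [Fintype m] [Fintype n] [DecidableEq m] [DecidableEq n]

theorem eq_fromCols_mul_fromRows_of_forall_eq_zero (A : Matrix m n R) {I : Finset m}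
    {J : Finset n} (hA : ∀ i ∈ I, ∀ j ∈ J, A i j = 0) :
    A = (fromCols ((1 : Matrix m m R).submatrix id (↑)) (A.submatrix id (↑)) :
        Matrix m ((Iᶜ : Finset m) ⊕ (Jᶜ : Finset n)) R) *
      (fromRows (of fun i j => if j ∈ J then A i j else 0) ((1 : Matrix n n R).submatrix (↑) id) :
        Matrix ((Iᶜ : Finset m) ⊕ (Jᶜ : Finset n)) n R) := by
  rw [fromCols_mul_fromRows]
  ext i j
  rw [add_apply, one_submatrix_val_mul_apply, mul_one_submatrix_val_apply]
  by_cases hi : i ∈ I <;> by_cases hj : j ∈ J <;> simp [hi, hj, hA]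

end Matrix

theorem stmt3 {R : Type*} [Ring R] {n : ℕ}
    (A : Matrix (Fin n) (Fin n) R)
    (I J : Finset (Fin n)) (hcard : n < I.card + J.card)
    (hzero : ∀ i ∈ I, ∀ j ∈ J, A i j = 0) :
    ∃ m : ℕ, m < n ∧ ∃ (T : Matrix (Fin n) (Fin m) R) (U : Matrix (Fin m) (Fin n) R),
      A = T * U := by
  obtain ⟨T, U, hTU⟩ :=
    Matrix.exists_eq_mul_fin_of_eq_mul (A.eq_fromCols_mul_fromRows_of_forall_eq_zero hzero)
  refine ⟨_, ?_, T, U, hTU⟩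
  have hI : I.card ≤ n := by simpa using I.card_le_univ
  have hJ : J.card ≤ n := by simpa using J.card_le_univ
  simp only [Fintype.card_sum, Fintype.card_coe, Finset.card_compl, Fintype.card_fin]
  omega
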